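/- arXiv:2505.13303 — 2 statements merged into one kernel-verified Lean document; each statement's English description precedes it below -/
import Mathlib

section
/- Let D be a division ring with center F of characteristic p > 0, finite-dimensional over F, such that p does not divide √(dim_F D), and let n be a positive integer not divisible by p. Then M_n(D) = Z(M_n(D)) + [M_n(D), M_n(D)]. -/
/-!
A matrix whose trace lies in `[R, R]` lies in `[M_n(R), M_n(R)]`: off-diagonal matrix units and
differences of diagonal ones are commutators, and `E_ii (ab - ba) = [E_ii a, E_ii b]`. So it
suffices that `D = F + [D, D]` and that `n` is invertible in `F`; then `A - (c / n) • 1` lies in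
`[M_n(D), M_n(D)]` whenever `tr A - c ∈ [D, D]`.

For `D = F + [D, D]`: a nonzero `F`-linear functional `φ` on `D` with `φ (a b) = φ (b a)` is unique
up to a central scalar, because `a ↦ φ (a * ·)` identifies `D` with its dual and the trace property
forces the element representing another such functional to be central. The regular trace is such
a functional with value `dim_F D = m²` at `1`, nonzero since `p ∤ m`. Hence every functional that
kills `[D, D]` is a multiple of it, and `[D, D]` is a hyperplane complementary to `F`.
-/

/-- The additive subgroup generated by all additive commutators of a ring. -/
def commutatorAddSubgroup (R : Type*) [Ring R] : AddSubgroup R :=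
  AddSubgroup.closure {x | ∃ a b : R, x = a * b - b * a}

lemma commutator_mem_commutatorAddSubgroup {R : Type*} [Ring R] (a b : R) :
    a * b - b * a ∈ commutatorAddSubgroup R :=
  AddSubgroup.subset_closure ⟨a, b, rfl⟩

section Matrix

open Matrix

variable {ι R : Type*} [Fintype ι] [DecidableEq ι] [Ring R]

lemma single_mem_commutatorAddSubgroup_of_ne {i j : ι} (h : i ≠ j) (c : R) :
    single i j c ∈ commutatorAddSubgroup (Matrix ι ι R) := by
  have : single i j c = single i i 1 * single i j c - single i j c * single i i 1 := by
    rw [single_mul_single_same, single_mul_single_of_ne (h := h.symm), one_mul, sub_zero]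
  exact this ▸ commutator_mem_commutatorAddSubgroup _ _

lemma single_sub_single_mem_commutatorAddSubgroup (i j : ι) (c : R) :
    single i i c - single j j c ∈ commutatorAddSubgroup (Matrix ι ι R) := by
  have : single i i c - single j j c = single i j c * single j i 1 - single j i 1 * single i j c := by
    rw [single_mul_single_same, single_mul_single_same, mul_one, one_mul]
  exact this ▸ commutator_mem_commutatorAddSubgroup _ _

lemma commutatorAddSubgroup_le_comap_single (i : ι) :
    commutatorAddSubgroup R ≤
      (commutatorAddSubgroup (Matrix ι ι R)).comap (singleAddMonoidHom i i) := by
  refine (AddSubgroup.closure_le _).mpr ?_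
  rintro _ ⟨a, b, rfl⟩
  have : single i i (a * b - b * a) = single i i a * single i i b - single i i b * single i i a := by
    rw [single_mul_single_same, single_mul_single_same]
    exact map_sub (singleAddMonoidHom (α := R) i i) _ _
  change single i i (a * b - b * a) ∈ commutatorAddSubgroup _
  exact this ▸ commutator_mem_commutatorAddSubgroup _ _

lemma sub_single_trace_mem_commutatorAddSubgroup (i₀ : ι) (A : Matrix ι ι R) :
    A - single i₀ i₀ A.trace ∈ commutatorAddSubgroup (Matrix ι ι R) := by
  induction A using Matrix.induction_on' with
  | h_zero => simp
  | h_add A B hA hB =>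
    rw [trace_add, single_add, add_sub_add_comm]
    exact add_mem hA hB
  | h_std_basis i j c =>
    rcases eq_or_ne i j with rfl | hij
    · rw [trace_single_eq_same]
      exact single_sub_single_mem_commutatorAddSubgroup i i₀ c
    · rw [trace_single_eq_of_ne _ _ _ hij, single_zero, sub_zero]
      exact single_mem_commutatorAddSubgroup_of_ne hij c

lemma mem_commutatorAddSubgroup_of_trace_mem [Nonempty ι] {A : Matrix ι ι R}
    (hA : A.trace ∈ commutatorAddSubgroup R) : A ∈ commutatorAddSubgroup (Matrix ι ι R) := by
  obtain ⟨i₀⟩ := ‹Nonempty ι›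
  simpa using add_mem (sub_single_trace_mem_commutatorAddSubgroup i₀ A)
    (commutatorAddSubgroup_le_comap_single i₀ hA)

end Matrix

lemma smul_mem_commutatorAddSubgroup {K R : Type*} [CommRing K] [Ring R] [Algebra K R] (c : K)
    {x : R} (hx : x ∈ commutatorAddSubgroup R) : c • x ∈ commutatorAddSubgroup R := by
  induction hx using AddSubgroup.closure_induction with
  | mem _ h =>
    obtain ⟨a, b, rfl⟩ := h
    rw [smul_sub, ← smul_mul_assoc, ← mul_smul_comm]
    exact commutator_mem_commutatorAddSubgroup _ _
  | zero => simp [zero_mem]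
  | add x y _ _ hx hy => simpa [smul_add] using add_mem hx hy
  | neg x _ hx => simpa [smul_neg] using neg_mem hx

def commutatorSubmodule (K R : Type*) [CommRing K] [Ring R] [Algebra K R] : Submodule K R where
  toAddSubmonoid := (commutatorAddSubgroup R).toAddSubmonoid
  smul_mem' := smul_mem_commutatorAddSubgroup

section DivisionRing

variable {D : Type*} [DivisionRing D] [FiniteDimensional (Subring.center D) D]

local notation "F" => Subring.center D

theorem exists_eq_smul_of_map_mul_comm {φ ψ : D →ₗ[F] F} (hφ : φ ≠ 0)
    (hφc : ∀ a b, φ (a * b) = φ (b * a)) (hψc : ∀ a b, ψ (a * b) = ψ (b * a)) :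
    ∃ c : F, ψ = c • φ := by
  let L : D →ₗ[F] Module.Dual F D := (LinearMap.mul F D).compr₂ φ
  have hL : Function.Injective L := by
    refine (injective_iff_map_eq_zero L).mpr fun a ha ↦ by_contra fun ha0 ↦ hφ ?_
    ext x
    simpa [L, ha0] using LinearMap.congr_fun ha (a⁻¹ * x)
  obtain ⟨c, hc⟩ := ((LinearMap.injective_iff_surjective_of_finrank_eq_finrank
    Subspace.dual_finrank_eq.symm).mp hL) ψ
  have hc_central : c ∈ Subring.center D := by
    refine Subring.mem_center_iff.mpr fun a ↦ hL (LinearMap.ext fun b ↦ ?_)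
    change φ (a * c * b) = φ (c * a * b)
    calc φ (a * c * b) = φ (c * (b * a)) := by rw [mul_assoc, hφc, mul_assoc]
      _ = ψ (b * a) := by rw [← hc]; rfl
      _ = ψ (a * b) := hψc b a
      _ = φ (c * a * b) := by rw [← hc, mul_assoc]; rfl
  refine ⟨⟨c, hc_central⟩, LinearMap.ext fun x ↦ ?_⟩
  rw [← hc]
  exact φ.map_smul ⟨c, hc_central⟩ x

theorem exists_sub_algebraMap_mem_commutatorAddSubgroup_of_map_mul_comm {φ : D →ₗ[F] F}
    (hφc : ∀ a b, φ (a * b) = φ (b * a)) (hφ1 : φ 1 ≠ 0) (t : D) :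
    ∃ c : F, t - algebraMap F D c ∈ commutatorAddSubgroup D := by
  refine ⟨φ t / φ 1, by_contra fun h ↦ ?_⟩
  obtain ⟨ψ, hψt, hψ⟩ := Submodule.exists_le_ker_of_notMem (p := commutatorSubmodule F D) h
  have hψc (a b : D) : ψ (a * b) = ψ (b * a) :=
    sub_eq_zero.mp <| (map_sub ψ _ _).symm.trans (hψ (commutator_mem_commutatorAddSubgroup a b))
  obtain ⟨k, rfl⟩ := exists_eq_smul_of_map_mul_comm (fun h0 ↦ hφ1 (by simp [h0])) hφc hψc
  apply hψt
  rw [LinearMap.smul_apply, map_sub, Algebra.algebraMap_eq_smul_one, map_smul, smul_eq_mul,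
    smul_eq_mul, div_mul_cancel₀ _ hφ1, sub_self, mul_zero]

theorem exists_sub_algebraMap_mem_commutatorAddSubgroup
    (h : (Module.finrank F D : F) ≠ 0) (t : D) :
    ∃ c : F, t - algebraMap F D c ∈ commutatorAddSubgroup D :=
  exists_sub_algebraMap_mem_commutatorAddSubgroup_of_map_mul_comm
    (φ := LinearMap.trace F D ∘ₗ (Algebra.lmul F D).toLinearMap)
    (fun a b ↦ by simp only [LinearMap.comp_apply, AlgHom.toLinearMap_apply, map_mul,
      LinearMap.trace_mul_comm])
    (by rwa [LinearMap.comp_apply, AlgHom.toLinearMap_apply, map_one, LinearMap.trace_one]) t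

end DivisionRing

section Center

open Matrix

variable {ι R K : Type*} [Fintype ι] [DecidableEq ι] [Ring R] [Field K] [Algebra K R]

lemma trace_algebraMap (r : K) :
    (algebraMap K (Matrix ι ι R) r).trace = Fintype.card ι • algebraMap K R r := by
  simp [algebraMap_eq_diagonal, trace_diagonal]

theorem exists_mem_center_add_mem_commutatorAddSubgroup
    (hR : ∀ t : R, ∃ c : K, t - algebraMap K R c ∈ commutatorAddSubgroup R)
    (hι : (Fintype.card ι : K) ≠ 0) (A : Matrix ι ι R) :
    ∃ z ∈ Set.center (Matrix ι ι R),
      ∃ c ∈ commutatorAddSubgroup (Matrix ι ι R), A = z + c := by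
  have : Nonempty ι := Fintype.card_pos_iff.mp (Nat.pos_of_ne_zero fun h ↦ hι (by simp [h]))
  obtain ⟨c, hc⟩ := hR A.trace
  refine ⟨algebraMap K _ ((Fintype.card ι : K)⁻¹ * c), Set.algebraMap_mem_center _, _,
    mem_commutatorAddSubgroup_of_trace_mem ?_, (add_sub_cancel _ _).symm⟩
  rwa [trace_sub, trace_algebraMap, ← map_nsmul, nsmul_eq_mul, mul_inv_cancel_left₀ hι]

end Center

theorem stmt_4_general (D : Type*) [DivisionRing D]
    [FiniteDimensional (Subring.center D) D]
    (p : ℕ) [hp : Fact p.Prime] [CharP D p]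
    (m : ℕ) (hm : Module.finrank (Subring.center D) D = m ^ 2) (hpm : ¬ p ∣ m)
    (n : ℕ) (hpn : ¬ p ∣ n) :
    ∀ A : Matrix (Fin n) (Fin n) D,
      ∃ z ∈ Set.center (Matrix (Fin n) (Fin n) D),
        ∃ c ∈ commutatorAddSubgroup (Matrix (Fin n) (Fin n) D), A = z + c := by
  have hdim : (Module.finrank (Subring.center D) D : Subring.center D) ≠ 0 := by
    rw [Ne, CharP.cast_eq_zero_iff _ p, hm]
    exact fun h ↦ hpm (hp.out.dvd_of_dvd_pow h)
  have hcard : (Fintype.card (Fin n) : Subring.center D) ≠ 0 := by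
    rwa [Fintype.card_fin, Ne, CharP.cast_eq_zero_iff _ p]
  exact exists_mem_center_add_mem_commutatorAddSubgroup
    (exists_sub_algebraMap_mem_commutatorAddSubgroup hdim) hcard

theorem stmt_4 (D : Type*) [DivisionRing D]
    [FiniteDimensional (Subring.center D) D]
    (p : ℕ) [hp : Fact p.Prime] [CharP D p]
    (m : ℕ) (hm : Module.finrank (Subring.center D) D = m ^ 2) (hpm : ¬ p ∣ m)
    (n : ℕ) (hn : 0 < n) (hpn : ¬ p ∣ n) :
    ∀ A : Matrix (Fin n) (Fin n) D,
      ∃ z ∈ Set.center (Matrix (Fin n) (Fin n) D),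
        ∃ c ∈ commutatorAddSubgroup (Matrix (Fin n) (Fin n) D), A = z + c :=
  stmt_4_general D p (hp := hp) m hm hpm n hpn
end

section
/- Let D be a finite-dimensional division F-algebra, α ∈ D, and suppose the subfield F(α) generated by F and α is a maximal subfield of D. Then there exists γ ∈ D∖{0} such that D is generated as an F-algebra by α and γαγ⁻¹. -/
/-
`K = F[α]` is a maximal subfield, so `C(K) = K`, and by the primitive element theorem `K` has
only finitely many subalgebras `L`. For each `L` with `C(L) ≠ D`, Cartan–Brauer–Hua gives a
conjugate of the noncentral `α` outside `C(L)`. The condition `γ α γ⁻¹ ∉ C(L)` on `γ` is Zariski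
open, so over the infinite field `F` a single `γ` works for all these `L` at once. For
`A = F[α, γ α γ⁻¹]`, the centralizer `C(A) ⊆ C(K) = K` is one of the `L`, and it commutes with
`γ α γ⁻¹ ∈ A`, so it is central. Finally, a maximal subfield `K` of a division algebra with center
`Z` satisfies `[Z:F] [D:F] = [K:F]²` (density theorem plus Artin–Whaples independence of left and
right multiplications); applied to `A` and to `D` this gives `A = D`.
-/

open Module IntermediateField
open scoped IsMulCommutative

section DivisionAlgebra

variable {F D : Type*} [Field F] [DivisionRing D] [Algebra F D]

theorem Subalgebra.inv_mem_of_finiteDimensional [FiniteDimensional F D] (S : Subalgebra F D)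
    {x : D} (hx : x ∈ S) : x⁻¹ ∈ S := by
  rcases eq_or_ne x 0 with rfl | hx0
  · simp
  obtain ⟨y, hy⟩ := FiniteDimensional.exists_mul_eq_one F (K := S) (x := ⟨x, hx⟩)
    fun h ↦ hx0 (congrArg Subtype.val h)
  rw [inv_eq_of_mul_eq_one_right (congrArg Subtype.val hy)]
  exact y.2

theorem Subalgebra.commute_of_conj_mem_of_notMem [FiniteDimensional F D] {N : Subalgebra F D}
    (hconj : ∀ u : D, u ≠ 0 → ∀ x ∈ N, u * x * u⁻¹ ∈ N) {a c : D} (ha : a ∈ N) (hc : c ∉ N) :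
    Commute a c := by
  have hc0 : c ≠ 0 := by rintro rfl; exact hc N.zero_mem
  have hc1 : 1 + c ≠ 0 := fun h ↦ hc (by
    rw [eq_neg_of_add_eq_zero_right h]; exact N.neg_mem N.one_mem)
  set a₁ := c * a * c⁻¹
  set a₂ := (1 + c) * a * (1 + c)⁻¹
  have h₁ : c * a = a₁ * c := by simp [a₁, mul_assoc, hc0]
  have h₂ : (1 + c) * a = a₂ * (1 + c) := by simp [a₂, mul_assoc, hc1]
  -- comparing the two conjugation identities expresses `c` through elements of `N`
  have h : (a₁ - a₂) * c = a₂ - a := by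
    have : (a₁ - a₂) * c - (a₂ - a) = ((1 + c) * a - a₂ * (1 + c)) - (c * a - a₁ * c) := by
      noncomm_ring
    rwa [h₁, h₂, sub_self, sub_self, sub_zero, sub_eq_zero] at this
  by_cases h12 : a₁ = a₂
  · have : a₂ = a := by rwa [h12, sub_self, zero_mul, eq_comm, sub_eq_zero] at h
    rw [Commute, SemiconjBy, h₁, h12, this]
  · refine absurd ?_ hc
    rw [← inv_mul_cancel_left₀ (sub_ne_zero.mpr h12) c, h]
    exact N.mul_mem (N.inv_mem_of_finiteDimensional (N.sub_mem (hconj c hc0 a ha)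
      (hconj _ hc1 a ha))) (N.sub_mem (hconj _ hc1 a ha) ha)

/-- Cartan–Brauer–Hua theorem for finite-dimensional division algebras. -/
theorem Subalgebra.le_center_of_conj_mem [FiniteDimensional F D] {N : Subalgebra F D}
    (hN : N ≠ ⊤) (hconj : ∀ u : D, u ≠ 0 → ∀ x ∈ N, u * x * u⁻¹ ∈ N) :
    N ≤ Subalgebra.center F D := by
  obtain ⟨c, hc⟩ : ∃ c, c ∉ N := by
    by_contra! h
    exact hN (eq_top_iff.mpr fun x _ ↦ h x)
  intro a ha
  rw [Subalgebra.mem_center_iff]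
  intro b
  by_cases hb : b ∈ N
  · have hbc : b + c ∉ N := fun h ↦ hc (by simpa using N.sub_mem h hb)
    have := (N.commute_of_conj_mem_of_notMem hconj ha hbc).sub_right
      (N.commute_of_conj_mem_of_notMem hconj ha hc)
    rw [add_sub_cancel_right] at this
    exact this.eq.symm
  · exact (N.commute_of_conj_mem_of_notMem hconj ha hb).eq.symm

theorem exists_conj_notMem [FiniteDimensional F D] {α : D} (hα : α ∉ Subalgebra.center F D)
    {E : Subalgebra F D} (hE : E ≠ ⊤) : ∃ δ : D, δ ≠ 0 ∧ δ * α * δ⁻¹ ∉ E := by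
  by_contra! h
  set N := Algebra.adjoin F {y | ∃ δ : D, δ ≠ 0 ∧ δ * α * δ⁻¹ = y}
  have hconj : ∀ u : D, u ≠ 0 → ∀ x ∈ N, u * x * u⁻¹ ∈ N := by
    intro u hu x hx
    induction hx using Algebra.adjoin_induction with
    | mem x hx =>
      obtain ⟨δ, hδ, rfl⟩ := hx
      exact Algebra.subset_adjoin ⟨u * δ, mul_ne_zero hu hδ, by simp [mul_assoc]⟩
    | algebraMap r => simp [Algebra.commutes, mul_assoc, hu]
    | add x y _ _ hx hy => simpa [mul_add, add_mul] using N.add_mem hx hy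
    | mul x y _ _ hx hy =>
      convert N.mul_mem hx hy using 1
      simp [mul_assoc, hu]
  have hNE : N ≤ E := Algebra.adjoin_le fun y ⟨δ, hδ, hy⟩ ↦ hy ▸ h δ hδ
  exact hα (Subalgebra.le_center_of_conj_mem (ne_top_of_le_ne_top hE hNE) hconj
    (Algebra.subset_adjoin ⟨1, one_ne_zero, by simp⟩))

theorem infinite_of_notMem_center [FiniteDimensional F D] {α : D}
    (hα : α ∉ Subalgebra.center F D) : Infinite F := by
  by_contra hfin
  have := not_infinite_iff_finite.mp hfin
  have := Module.finite_of_finite F (M := D)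
  let := littleWedderburn D
  exact hα (Subalgebra.mem_center_iff.mpr fun b ↦ mul_comm b α)

theorem Algebra.finite_Iic_adjoin_singleton [FiniteDimensional F D] (α : D) :
    (Set.Iic (Algebra.adjoin F {α})).Finite := by
  set K := Algebra.adjoin F {α}
  let : Field K := fieldOfFiniteDimensional F K
  have hpre : ((↑) : K → D) ⁻¹' {α} = {⟨α, Algebra.self_mem_adjoin_singleton F α⟩} := by
    ext; simp [Subtype.ext_iff]
  have hprim : ∃ x : K, F⟮x⟯ = ⊤ := ⟨_, adjoin_eq_top_of_algebra F _
    (hpre ▸ Algebra.adjoin_adjoin_coe_preimage)⟩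
  have := Field.finite_intermediateField_of_exists_primitive_element F K hprim
  have : Finite (Subalgebra F K) := .of_equiv _ subalgebraEquivIntermediateField.symm.toEquiv
  refine (Set.finite_range (Subalgebra.map K.val)).subset fun L hL ↦ ⟨L.comap K.val, ?_⟩
  rw [Subalgebra.map_comap_eq, Subalgebra.range_val]
  exact inf_eq_left.mpr hL

end DivisionAlgebra

section ZariskiOpen

variable {F V : Type*} [Field F] [Infinite F] [AddCommGroup V] [Module F V]
  [FiniteDimensional F V]

theorem exists_forall_det_ne_zero {J : Type*} [Finite J] {M : J → Type*}
    [∀ j, AddCommGroup (M j)] [∀ j, Module F (M j)] [∀ j, FiniteDimensional F (M j)]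
    (φ : ∀ j, V →ₗ[F] Module.End F (M j)) (h : ∀ j, ∃ v, (φ j v).det ≠ 0) :
    ∃ v, ∀ j, (φ j v).det ≠ 0 := by
  classical
  have := Fintype.ofFinite J
  let b := finBasis F V
  -- up to sign, `det (φ j v)` is this polynomial evaluated at the coordinates of `v`
  let p : J → MvPolynomial (Fin (finrank F V)) F := fun j ↦ ((φ j).polyCharpoly b).coeff 0
  have hp : ∀ j v, MvPolynomial.eval (b.repr v) (p j) ≠ 0 ↔ (φ j v).det ≠ 0 := by
    intro j v
    rw [LinearMap.polyCharpoly_coeff_eval, LinearMap.det_eq_sign_charpoly_coeff]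
    simp
  have hprod : ∏ j, p j ≠ 0 := Finset.prod_ne_zero_iff.mpr fun j _ hj ↦ by
    obtain ⟨v, hv⟩ := h j
    exact (hp j v).mpr hv (by rw [hj, map_zero])
  obtain ⟨x, hx⟩ : ∃ x, MvPolynomial.eval x (∏ j, p j) ≠ 0 := by
    by_contra! H
    exact hprod (MvPolynomial.funext fun x ↦ by simp [H x])
  refine ⟨b.equivFun.symm x, fun j ↦ (hp j _).mp ?_⟩
  rw [← Basis.equivFun_apply, b.equivFun.apply_symm_apply]
  exact Finset.prod_ne_zero_iff.mp (by rwa [map_prod] at hx) j (Finset.mem_univ j)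

theorem exists_forall_injective {J : Type*} [Finite J] {M W : J → Type*}
    [∀ j, AddCommGroup (M j)] [∀ j, Module F (M j)] [∀ j, FiniteDimensional F (M j)]
    [∀ j, AddCommGroup (W j)] [∀ j, Module F (W j)]
    (f : ∀ j, V →ₗ[F] M j →ₗ[F] W j) (h : ∀ j, ∃ v, Function.Injective (f j v)) :
    ∃ v, ∀ j, Function.Injective (f j v) := by
  choose v hv using h
  choose g hg using fun j ↦ (f j (v j)).exists_leftInverse_of_injective
    (LinearMap.ker_eq_bot.mpr (hv j))
  obtain ⟨w, hw⟩ := exists_forall_det_ne_zero (fun j ↦ (LinearMap.llcomp F _ _ _ (g j)).comp (f j))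
    fun j ↦ ⟨v j, by simp [LinearMap.llcomp_apply', hg j]⟩
  refine ⟨w, fun j ↦ Function.Injective.of_comp (f := g j) ?_⟩
  exact ((Module.End.isUnit_iff _).mp
    ((LinearMap.isUnit_iff_isUnit_det _).mpr (hw j).isUnit)).injective

end ZariskiOpen

section Conjugates

variable {F D : Type*} [Field F] [DivisionRing D] [Algebra F D]

/-- Encodes `γ α γ⁻¹ ∉ E` as injectivity of a map depending linearly on `γ`
(`injective_conjAvoidMap_iff`). -/
def conjAvoidMap (E : Submodule F D) (α : D) : D →ₗ[F] E × F →ₗ[F] D :=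
  LinearMap.mk₂ F (fun γ p ↦ (p.1 : D) * γ + p.2 • (γ * α))
    (fun γ γ' p ↦ by simp only [mul_add, add_mul, smul_add]; abel)
    (fun c γ p ↦ by simp only [mul_smul_comm, smul_mul_assoc, smul_add, smul_comm c p.2])
    (fun γ p p' ↦ by
      simp only [Prod.fst_add, Prod.snd_add, Submodule.coe_add, add_mul, add_smul]; abel)
    (fun c p γ ↦ by simp only [Prod.smul_fst, Prod.smul_snd, Submodule.coe_smul, smul_mul_assoc,
      smul_add, smul_eq_mul, mul_smul])

theorem conjAvoidMap_apply (E : Submodule F D) (α γ : D) (p : E × F) :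
    conjAvoidMap E α γ p = (p.1 : D) * γ + p.2 • (γ * α) := rfl

theorem injective_conjAvoidMap_iff {E : Submodule F D} {α γ : D} :
    Function.Injective (conjAvoidMap E α γ) ↔ γ ≠ 0 ∧ γ * α * γ⁻¹ ∉ E := by
  rw [← LinearMap.ker_eq_bot, Submodule.eq_bot_iff]
  simp only [LinearMap.mem_ker, conjAvoidMap_apply]
  constructor
  · intro h
    have hγ : γ ≠ 0 := fun hγ ↦ by simpa using h (0, 1) (by simp [hγ])
    refine ⟨hγ, fun hE ↦ ?_⟩
    simpa using h (-⟨_, hE⟩, 1) (by simp [mul_assoc, hγ])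
  · rintro ⟨hγ, hE⟩ ⟨e, c⟩ hp
    by_cases hc : c = 0
    · subst hc
      simpa [hγ] using hp
    · refine absurd ?_ hE
      have h1 : c • (γ * α) = -((e : D) * γ) := eq_neg_of_add_eq_zero_right hp
      have : γ * α * γ⁻¹ = -c⁻¹ • (e : D) := by
        rw [← inv_smul_smul₀ hc (γ * α), h1]
        simp [hγ]
      rw [this]
      exact E.smul_mem _ e.2

theorem exists_conj_forall_notMem [FiniteDimensional F D] [Infinite F] (α : D) {J : Type*}
    [Finite J] (E : J → Submodule F D) (h : ∀ j, ∃ δ : D, δ ≠ 0 ∧ δ * α * δ⁻¹ ∉ E j) :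
    ∃ γ : D, γ ≠ 0 ∧ ∀ j, γ * α * γ⁻¹ ∉ E j := by
  obtain ⟨γ, hγ⟩ := exists_forall_injective (fun j ↦ conjAvoidMap (E j) α)
    fun j ↦ ⟨_, injective_conjAvoidMap_iff.mpr (h j).choose_spec⟩
  rcases isEmpty_or_nonempty J with hJ | ⟨⟨j₀⟩⟩
  · exact ⟨1, one_ne_zero, hJ.elim⟩
  · exact ⟨γ, (injective_conjAvoidMap_iff.mp (hγ j₀)).1,
      fun j ↦ (injective_conjAvoidMap_iff.mp (hγ j)).2⟩

end Conjugates

/-- Artin–Whaples independence of left and right multiplications over the center. -/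
theorem Algebra.IsCentral.eq_zero_of_forall_sum_mul_mul_eq_zero {Z D : Type*} [Field Z]
    [DivisionRing D] [Algebra Z D] [Algebra.IsCentral Z D] {ι : Type*} {b : ι → D}
    (hb : LinearIndependent Z b) (s : Finset ι) {k : ι → D}
    (h : ∀ x, ∑ i ∈ s, k i * x * b i = 0) : ∀ i ∈ s, k i = 0 := by
  classical
  induction s using Finset.strongInduction generalizing k with | H s ih => ?_
  by_contra! hne
  obtain ⟨t, hts, hkt⟩ := hne
  set k' : ι → D := fun i ↦ (k t)⁻¹ * k i
  have hk't : k' t = 1 := inv_mul_cancel₀ hkt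
  have h' : ∀ x, ∑ i ∈ s, k' i * x * b i = 0 := fun x ↦ by
    simp only [k', mul_assoc, ← Finset.mul_sum]
    simpa [← mul_assoc] using congrArg ((k t)⁻¹ * ·) (h x)
  -- commutators with `y` satisfy a shorter relation, hence vanish: `k' i` is central
  have hcentral : ∀ i ∈ s, ∃ z : Z, algebraMap Z D z = k' i := fun i hi ↦ by
    refine (Algebra.IsCentral.mem_center_iff Z).mp (Subalgebra.mem_center_iff.mpr fun y ↦ ?_)
      |>.imp fun _ ↦ Eq.symm
    by_cases hit : i = t
    · simp [hit, hk't]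
    refine (sub_eq_zero.mp (ih _ (Finset.erase_ssubset hts) (k := fun j ↦ k' j * y - y * k' j)
      (fun x ↦ ?_) i (Finset.mem_erase.mpr ⟨hit, hi⟩))).symm
    have hsum : ∑ j ∈ s, (k' j * y - y * k' j) * x * b j = 0 := by
      have e : ∀ j, (k' j * y - y * k' j) * x * b j =
          k' j * (y * x) * b j - y * (k' j * x * b j) := fun j ↦ by noncomm_ring
      simp only [e, Finset.sum_sub_distrib, ← Finset.mul_sum, h', mul_zero, sub_zero]
    rwa [← Finset.add_sum_erase s _ hts, hk't, one_mul, mul_one, sub_self, zero_mul, zero_mul,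
      zero_add] at hsum
  choose! z hz using hcentral
  have hzt := linearIndependent_iff'.mp hb s z (by
    simpa [Algebra.smul_def, Finset.sum_congr rfl fun i hi ↦ congrArg (· * b i) (hz i hi)]
      using h' 1) t hts
  simp [← hz t hts, hzt] at hk't

section MaximalSubfield

variable {F D : Type*} [Field F] [DivisionRing D] [Algebra F D]

namespace Subalgebra

section MulRightAlgebra

variable (K : Subalgebra F D) [IsMulCommutative K]

def mulRightAlgebra : Subalgebra K (Module.End K D) :=
  (Submodule.span K (Set.range (LinearMap.mulRight K))).toSubalgebra
    (Submodule.subset_span ⟨1, LinearMap.mulRight_one K D⟩) fun x y hx hy ↦ by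
      have := Submodule.mul_mem_mul hx hy
      rw [Submodule.span_mul_span] at this
      refine Submodule.span_mono ?_ this
      rintro _ ⟨_, ⟨a, rfl⟩, _, ⟨b, rfl⟩, rfl⟩
      exact ⟨b * a, LinearMap.mulRight_mul K D b a⟩

theorem mulRight_mem_mulRightAlgebra (c : D) : LinearMap.mulRight K c ∈ K.mulRightAlgebra :=
  Submodule.subset_span ⟨c, rfl⟩

instance : IsSimpleModule K.mulRightAlgebra D :=
  isSimpleModule_iff_toSpanSingleton_surjective.mpr ⟨inferInstance, fun v hv x ↦
    ⟨⟨_, K.mulRight_mem_mulRightAlgebra (v⁻¹ * x)⟩, by simp [Subalgebra.smul_def, hv]⟩⟩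

variable {K}

theorem exists_eq_smul_of_mulRightAlgebra_linear (hK : centralizer F (K : Set D) ≤ K)
    (ψ : Module.End K.mulRightAlgebra D) : ∃ k : K, ∀ x, ψ x = k • x := by
  have hmul : ∀ x, ψ x = ψ 1 * x := fun x ↦ by
    simpa [Subalgebra.smul_def] using ψ.map_smul ⟨_, K.mulRight_mem_mulRightAlgebra x⟩ 1
  have hK1 : ψ 1 ∈ K := hK fun k hk ↦ by
    have := ψ.map_smul ⟨_, K.mulRightAlgebra.algebraMap_mem ⟨k, hk⟩⟩ 1
    simp only [Subalgebra.smul_def, Module.End.smul_def, Module.algebraMap_end_apply] at this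
    simpa [Subalgebra.smul_def, ← hmul] using this.symm
  exact ⟨⟨_, hK1⟩, fun x ↦ hmul x⟩

theorem mulRightAlgebra_eq_top [FiniteDimensional F D] (hK : centralizer F (K : Set D) ≤ K) :
    K.mulRightAlgebra = ⊤ := by
  classical
  refine eq_top_iff.mpr fun g _ ↦ ?_
  obtain ⟨w, hw⟩ := jacobson_density (R := K.mulRightAlgebra)
    { toFun := g
      map_add' := g.map_add
      map_smul' := fun ψ x ↦ by
        obtain ⟨k, hk⟩ := exists_eq_smul_of_mulRightAlgebra_linear hK ψ
        simp only [Module.End.smul_def, hk, map_smul, RingHom.id_apply] }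
    (Finset.univ.image (finBasis F D))
  have : g = w := LinearMap.restrictScalars_injective F
    ((finBasis F D).ext fun i ↦ hw _ (Finset.mem_image_of_mem _ (Finset.mem_univ i)))
  exact this ▸ w.2

end MulRightAlgebra

theorem linearIndependent_mulRight {Z : Type*} [Field Z] [Algebra Z D]
    [Algebra.IsCentral Z D] (K : Subalgebra F D) [IsMulCommutative K] {ι : Type*} {b : ι → D}
    (hb : LinearIndependent Z b) : LinearIndependent K fun i ↦ LinearMap.mulRight K (b i) := by
  refine linearIndependent_iff'.mpr fun s g hg i hi ↦ Subtype.ext ?_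
  refine Algebra.IsCentral.eq_zero_of_forall_sum_mul_mul_eq_zero hb s (k := fun i ↦ (g i : D))
    (fun x ↦ ?_) i hi
  simpa [Subalgebra.smul_def, mul_assoc] using LinearMap.congr_fun hg x

theorem finrank_center_mul_finrank_eq_sq [FiniteDimensional F D] (K : Subalgebra F D)
    (hK : centralizer F (K : Set D) = K) :
    finrank F (center F D) * finrank F D = finrank F K ^ 2 := by
  have : IsMulCommutative K := .of_setLike_mul_comm fun a ha b hb ↦ (hK.ge ha b hb).symm
  let : Field K := fieldOfFiniteDimensional F K
  set Z := center F D
  let : Field Z := fieldOfFiniteDimensional F Z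
  let : Algebra Z D := Z.val.toRingHom.toAlgebra' fun z x ↦ (mem_center_iff.mp z.2 x).symm
  have : IsScalarTower F Z D := .of_algebraMap_eq fun _ ↦ rfl
  have : Algebra.IsCentral Z D := ⟨fun x hx ↦ ⟨⟨x, hx⟩, rfl⟩⟩
  have : FiniteDimensional Z D := .right F Z D
  have : FiniteDimensional K D := .right F K D
  have hZK : Z ≤ K := hK ▸ center_le_centralizer _ _
  -- right multiplications by a `Z`-basis of `D` form a `K`-basis of `End_K D`
  let bZ := finBasis Z D
  let v := fun i ↦ LinearMap.mulRight K (bZ i)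
  have hv : LinearIndependent K v := K.linearIndependent_mulRight bZ.linearIndependent
  have hspan : Submodule.span K (Set.range v) = ⊤ := by
    have h := congrArg Subalgebra.toSubmodule (mulRightAlgebra_eq_top hK.le)
    rw [mulRightAlgebra, Submodule.toSubalgebra_toSubmodule, Algebra.top_toSubmodule] at h
    rw [eq_top_iff, ← h, Submodule.span_le]
    rintro _ ⟨c, rfl⟩
    have : LinearMap.mulRight K c = ∑ i, (⟨_, hZK (bZ.repr c i).2⟩ : K) • v i := by
      ext x
      conv_lhs => rw [LinearMap.mulRight_apply, ← bZ.sum_repr c]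
      simp [v, Finset.mul_sum, Subalgebra.smul_def, Algebra.smul_def, ← mul_assoc,
        (mem_center_iff.mp (bZ.repr c _).2 x)]
    rw [this]
    exact Submodule.sum_mem _ fun i _ ↦ Submodule.smul_mem _ _ (Submodule.subset_span ⟨i, rfl⟩)
  have hEnd : finrank K D * finrank K D = finrank Z D := by
    rw [← Module.finrank_linearMap K K D D, ← finrank_top, ← hspan, finrank_span_eq_card hv,
      Fintype.card_fin]
  have hFKD := Module.finrank_mul_finrank F K D
  have hFZD := Module.finrank_mul_finrank F Z D
  have hk : finrank F K = finrank F Z * finrank K D :=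
    Nat.eq_of_mul_eq_mul_right (finrank_pos (R := K) (M := D)) (by
      rw [hFKD, ← hFZD, ← hEnd, mul_assoc])
  rw [← hFKD, hk]
  ring

theorem finrank_map_val {A : Subalgebra F D} (S : Subalgebra F A) :
    finrank F (S.map A.val) = finrank F S :=
  (S.equivMapOfInjective A.val Subtype.val_injective).toLinearEquiv.finrank_eq.symm

theorem eq_top_of_centralizer_le_center [FiniteDimensional F D] {K A : Subalgebra F D}
    (hKA : K ≤ A) (hK : centralizer F (K : Set D) = K)
    (hA : centralizer F (A : Set D) ≤ center F D) : A = ⊤ := by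
  let : DivisionRing A := divisionRingOfFiniteDimensional F A
  have hK' : centralizer F ((K.comap A.val : Subalgebra F A) : Set A) = K.comap A.val := by
    ext x
    refine ⟨fun hx ↦ ?_, fun hx g hg ↦ Subtype.ext (hK.ge hx g hg)⟩
    show (x : D) ∈ K
    exact hK ▸ fun g hg ↦ congrArg Subtype.val (hx ⟨g, hKA hg⟩ hg)
  have hcenter : (center F A).map A.val = center F D := by
    ext x
    simp only [mem_map, mem_center_iff, Subtype.forall, coe_val]
    refine ⟨?_, fun hx ↦ ⟨⟨x, hKA (hK ▸ center_le_centralizer F _ (mem_center_iff.mpr hx))⟩,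
      fun g _ ↦ Subtype.ext (hx g), rfl⟩⟩
    rintro ⟨y, hy, rfl⟩
    exact mem_center_iff.mp (hA fun g hg ↦ congrArg Subtype.val (hy g hg))
  have hKmap : (K.comap A.val).map A.val = K := by
    rw [map_comap_eq, range_val, inf_eq_left.mpr hKA]
  have h := finrank_center_mul_finrank_eq_sq _ hK'
  rw [← finrank_map_val (center F A), hcenter, ← finrank_map_val (K.comap A.val), hKmap,
    ← finrank_center_mul_finrank_eq_sq K hK] at h
  refine eq_of_le_of_finrank_eq le_top ?_
  rw [topEquiv.toLinearEquiv.finrank_eq]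
  exact Nat.eq_of_mul_eq_mul_left finrank_pos h

theorem centralizer_eq_self {K : Subalgebra F D}
    (hcomm : ∀ x ∈ K, ∀ y ∈ K, x * y = y * x)
    (hmax : ∀ L : Subalgebra F D, (∀ x ∈ L, ∀ y ∈ L, x * y = y * x) → K ≤ L → L = K) :
    centralizer F (K : Set D) = K := by
  refine le_antisymm (fun x hx ↦ ?_) fun x hx g hg ↦ hcomm g hg x hx
  have hL : ∀ a ∈ insert x (K : Set D), ∀ b ∈ insert x (K : Set D), a * b = b * a := by
    rintro a (rfl | ha) b (rfl | hb)
    exacts [rfl, (hx b hb).symm, hx a ha, hcomm a ha b hb]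
  have hLK := hmax _ (isMulCommutative_iff_of_setLike.mp (Algebra.isMulCommutative_adjoin F hL))
    fun y hy ↦ Algebra.subset_adjoin (Set.mem_insert_of_mem _ hy)
  exact hLK ▸ Algebra.subset_adjoin (Set.mem_insert x _)

end Subalgebra

end MaximalSubfield

theorem stmt_17 (F : Type*) [Field F] (D : Type*) [DivisionRing D] [Algebra F D]
    [FiniteDimensional F D] (α : D)
    (hmax : ∀ K : Subalgebra F D, (∀ x ∈ K, ∀ y ∈ K, x * y = y * x) →
      Algebra.adjoin F {α} ≤ K → K = Algebra.adjoin F {α}) :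
    ∃ γ : D, γ ≠ 0 ∧ Algebra.adjoin F {α, γ * α * γ⁻¹} = ⊤ := by
  set K := Algebra.adjoin F {α}
  have hK : Subalgebra.centralizer F (K : Set D) = K :=
    Subalgebra.centralizer_eq_self (isMulCommutative_iff_of_setLike.mp inferInstance) hmax
  by_cases hα : α ∈ Subalgebra.center F D
  · refine ⟨1, one_ne_zero, ?_⟩
    rw [one_mul, inv_one, mul_one, Set.pair_eq_singleton]
    change K = ⊤
    rw [← hK, Subalgebra.centralizer_eq_top_iff_subset]
    exact Algebra.adjoin_le (Set.singleton_subset_iff.mpr hα)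
  have := infinite_of_notMem_center hα
  set S := {L : Subalgebra F D | L ≤ K ∧ Subalgebra.centralizer F (L : Set D) ≠ ⊤}
  have := ((Algebra.finite_Iic_adjoin_singleton α).subset fun _ hL ↦ hL.1 : S.Finite).to_subtype
  obtain ⟨γ, hγ, hγS⟩ := exists_conj_forall_notMem α
    (fun L : S ↦ Subalgebra.toSubmodule (Subalgebra.centralizer F (L : Set D)))
    fun L ↦ exists_conj_notMem hα L.2.2
  refine ⟨γ, hγ, ?_⟩
  set A := Algebra.adjoin F {α, γ * α * γ⁻¹}
  have hKA : K ≤ A := Algebra.adjoin_mono (Set.singleton_subset_iff.mpr (Set.mem_insert _ _))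
  -- `C(A) ≤ K` commutes with `γ α γ⁻¹ ∈ A`, so by the choice of `γ` it is central
  have hA : Subalgebra.centralizer F (A : Set D) ≤ Subalgebra.center F D := by
    rw [← SetLike.coe_subset_coe, ← Subalgebra.centralizer_eq_top_iff_subset]
    by_contra h
    refine hγS ⟨_, hK ▸ Subalgebra.centralizer_le F _ _ hKA, h⟩ fun g hg ↦ ?_
    exact (hg _ (Algebra.subset_adjoin (Set.mem_insert_of_mem _ rfl))).symm
  exact Subalgebra.eq_top_of_centralizer_le_center hKA hK hA
end
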